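/- Let F: ℕ → ℂ satisfy the Wintner Assumption ∑_d |F'(d)|/d < ∞, and suppose the Wintner transform has finite support: Win_q F = 0 for all q > Q. Then F has the finite Ramanujan expansion F(a) = ∑_{q ≤ Q} (Win_q F) c_q(a) for every a ∈ ℕ. -/

import Mathlib

open scoped BigOperators

/-- The Ramanujan sum `c_q(a)`, via Kluyver's formula. -/
noncomputable def ramanujanSum (q a : ℕ) : ℤ :=
  ∑ d ∈ (Nat.gcd a q).divisors, (d : ℤ) * ArithmeticFunction.moebius (q / d)

/-- The Eratosthenes transform `F' = F ∗ μ`. -/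
noncomputable def eratosthenes (F : ℕ → ℂ) (d : ℕ) : ℂ :=
  ∑ e ∈ d.divisors, (ArithmeticFunction.moebius (d / e) : ℂ) * F e

/-- The Wintner coefficient `Win_q F = ∑_{d ≡ 0 mod q} F'(d)/d`. -/
noncomputable def winCoeff (F : ℕ → ℂ) (q : ℕ) : ℂ :=
  ∑' d : ℕ, if q ∣ d then eratosthenes F d / d else 0

/-! Write `b d = F'(d) / d`, so that `Win_q F = ∑_{q ∣ d} b d`. For `d > Q` the function
`k ↦ b (d k)` is absolutely summable and all its sums over multiples, `Win_{d m} F`, vanish.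
Sieving with `∑_{m ∣ n} μ(m) [m ∣ k] = [gcd(n, k) = 1]` for `n = N!` and letting `N → ∞`
(dominated convergence) leaves only the term `k = 1`, so `b d = 0`. Hence `F'` is supported
on `[1, Q]`, every `Win_q F` is a finite sum, and the expansion follows from `F = F' ∗ 1` and
`∑_{q ∣ d} c_q(a) = d [d ∣ a]`. -/

open Finset Filter Topology ArithmeticFunction
open scoped ArithmeticFunction.Moebius ArithmeticFunction.zeta Nat

theorem Nat.filter_dvd_divisors_eq_divisors_gcd {n : ℕ} (hn : n ≠ 0) (k : ℕ) :
    n.divisors.filter (· ∣ k) = (n.gcd k).divisors := by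
  ext m
  simp [Nat.dvd_gcd_iff, hn, Nat.gcd_ne_zero_left hn, and_comm]

theorem ArithmeticFunction.sum_divisors_moebius (n : ℕ) :
    ∑ d ∈ n.divisors, μ d = if n = 1 then 1 else 0 := by
  rw [← coe_mul_zeta_apply, moebius_mul_coe_zeta, one_apply]

theorem ArithmeticFunction.sum_divisors_moebius_smul_ite_dvd {E : Type*} [AddCommGroup E]
    {n : ℕ} (hn : n ≠ 0) (k : ℕ) (x : E) :
    ∑ m ∈ n.divisors, μ m • (if m ∣ k then x else 0) = if n.Coprime k then x else 0 := by
  simp_rw [smul_ite, smul_zero]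
  rw [← sum_filter, Nat.filter_dvd_divisors_eq_divisors_gcd hn, ← sum_smul, sum_divisors_moebius]
  split_ifs <;> simp_all

theorem tsum_ite_dvd_comp_mul {E : Type*} [AddCommMonoid E] [TopologicalSpace E] (c : ℕ → E)
    {d : ℕ} (hd : d ≠ 0) (q : ℕ) :
    ∑' k, (if q ∣ k then c (d * k) else 0) = ∑' j, if d * q ∣ j then c j else 0 := by
  simp_rw [← Nat.mul_dvd_mul_iff_left (Nat.pos_of_ne_zero hd) (b := q)]
  refine (mul_right_injective₀ hd).tsum_eq (f := fun j => if d * q ∣ j then c j else 0)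
    fun j hj => ?_
  obtain ⟨k, rfl⟩ : d ∣ j := (dvd_mul_right d q).trans (of_not_not fun h => hj (if_neg h))
  exact ⟨k, rfl⟩

section Sieve

variable {E : Type*} [NormedAddCommGroup E] [CompleteSpace E] {c : ℕ → E}

theorem summable_ite_dvd (hc : Summable fun k => ‖c k‖) (q : ℕ) :
    Summable fun k => if q ∣ k then c k else 0 :=
  hc.of_norm_bounded fun k => by split_ifs <;> simp

theorem tsum_ite_coprime_eq_sum_moebius (hc : Summable fun k => ‖c k‖) {n : ℕ} (hn : n ≠ 0) :
    ∑' k, (if n.Coprime k then c k else 0) =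
      ∑ m ∈ n.divisors, μ m • ∑' k, if m ∣ k then c k else 0 := by
  simp_rw [← sum_divisors_moebius_smul_ite_dvd hn]
  rw [Summable.tsum_finsetSum fun m _ => (summable_ite_dvd hc m).const_smul _]
  exact sum_congr rfl fun m _ => (summable_ite_dvd hc m).tsum_const_smul _

theorem tendsto_tsum_ite_coprime_factorial (hc : Summable fun k => ‖c k‖) :
    Tendsto (fun N => ∑' k, if (N !).Coprime k then c k else 0) atTop (𝓝 (c 1)) := by
  rw [← tsum_ite_eq 1 c]
  refine tendsto_tsum_of_dominated_convergence hc (fun k => ?_)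
    (Eventually.of_forall fun N k => by split_ifs <;> simp)
  by_cases hk : k = 1
  · simp [hk]
  obtain ⟨p, hp, hpk⟩ := Nat.exists_prime_and_dvd hk
  refine tendsto_const_nhds.congr' ?_
  filter_upwards [eventually_ge_atTop p] with N hN
  rw [if_neg hk, if_neg fun h => Nat.not_coprime_of_dvd_of_dvd hp.one_lt
    ((hp.dvd_factorial).2 hN) hpk h]

theorem apply_one_eq_zero_of_tsum_ite_dvd_eq_zero (hc : Summable fun k => ‖c k‖)
    (h : ∀ q ≠ 0, ∑' k, (if q ∣ k then c k else 0) = 0) : c 1 = 0 := by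
  have hzero : ∀ N, ∑' k, (if (N !).Coprime k then c k else 0) = 0 := fun N => by
    rw [tsum_ite_coprime_eq_sum_moebius hc (Nat.factorial_ne_zero N)]
    exact sum_eq_zero fun m hm => by rw [h m (Nat.ne_of_gt (Nat.pos_of_mem_divisors hm)), smul_zero]
  exact tendsto_nhds_unique (tendsto_tsum_ite_coprime_factorial hc) (by simp [hzero])

theorem apply_eq_zero_of_tsum_ite_dvd_eq_zero (hc : Summable fun k => ‖c k‖) {d : ℕ} (hd : d ≠ 0)
    (h : ∀ q ≠ 0, ∑' j, (if d * q ∣ j then c j else 0) = 0) : c d = 0 := by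
  simpa using apply_one_eq_zero_of_tsum_ite_dvd_eq_zero (c := fun k => c (d * k))
    (hc.comp_injective (mul_right_injective₀ hd)) fun q hq => by
      rw [tsum_ite_dvd_comp_mul c hd]; exact h q hq

end Sieve

theorem Nat.sum_divisors_eq_sum_Icc_ite_dvd {M : Type*} [AddCommMonoid M] {f : ℕ → M} {Q : ℕ}
    (hf : ∀ d, Q < d → f d = 0) {a : ℕ} (ha : 0 < a) :
    ∑ d ∈ a.divisors, f d = ∑ d ∈ Icc 1 Q, if d ∣ a then f d else 0 := by
  have hdiv : (Icc 1 Q).filter (· ∣ a) = a.divisors.filter (· ≤ Q) := by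
    ext d
    simp only [mem_filter, mem_Icc, Nat.mem_divisors]
    constructor
    · rintro ⟨⟨-, hdQ⟩, hda⟩; exact ⟨⟨hda, ha.ne'⟩, hdQ⟩
    · rintro ⟨⟨hda, -⟩, hdQ⟩; exact ⟨⟨Nat.pos_of_dvd_of_pos hda ha, hdQ⟩, hda⟩
  rw [← sum_filter, hdiv, sum_filter_of_ne fun d _ h => not_lt.1 (mt (hf d) h)]

theorem Nat.sum_Icc_sum_divisors_comm {M : Type*} [AddCommMonoid M] (Q : ℕ) (f : ℕ → ℕ → M) :
    ∑ d ∈ Icc 1 Q, ∑ q ∈ d.divisors, f d q =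
      ∑ q ∈ Icc 1 Q, ∑ d ∈ (Icc 1 Q).filter (q ∣ ·), f d q := by
  refine sum_comm' fun d q => ?_
  simp only [mem_Icc, Nat.mem_divisors, mem_filter]
  constructor
  · rintro ⟨hd, hqd, -⟩
    exact ⟨⟨hd, hqd⟩, Nat.pos_of_dvd_of_pos hqd hd.1, (Nat.le_of_dvd hd.1 hqd).trans hd.2⟩
  · rintro ⟨⟨hd, hqd⟩, -⟩; exact ⟨hd, hqd, by omega⟩

theorem sum_divisors_ramanujanSum (d a : ℕ) :
    ∑ q ∈ d.divisors, ramanujanSum q a = if d ∣ a then (d : ℤ) else 0 := by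
  rcases Nat.eq_zero_or_pos d with rfl | hd
  · simp
  refine (sum_eq_iff_sum_mul_moebius_eq (g := fun y => if y ∣ a then (y : ℤ) else 0)).mpr
    (fun n hn => ?_) d hd
  simp only [Int.cast_id]
  rw [Nat.sum_divisorsAntidiagonal' fun x y => μ x * if y ∣ a then (y : ℤ) else 0, ramanujanSum,
    Nat.gcd_comm, ← Nat.filter_dvd_divisors_eq_divisors_gcd hn.ne', sum_filter]
  exact sum_congr rfl fun e _ => by split_ifs <;> simp [mul_comm]

section Eratosthenes

variable {F : ℕ → ℂ}

theorem sum_divisors_eratosthenes {a : ℕ} (ha : 0 < a) :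
    ∑ d ∈ a.divisors, eratosthenes F d = F a :=
  sum_eq_iff_sum_mul_moebius_eq.mpr
    (fun _ _ => Nat.sum_divisorsAntidiagonal' fun x y => (μ x : ℂ) * F y) a ha

theorem eratosthenes_eq_zero_of_winCoeff_eq_zero
    (hWA : Summable fun d : ℕ => ‖eratosthenes F d‖ / d) {Q : ℕ}
    (hQ : ∀ q : ℕ, Q < q → winCoeff F q = 0) {d : ℕ} (hd : Q < d) : eratosthenes F d = 0 := by
  have hd0 : d ≠ 0 := by omega
  have hb : Summable fun d : ℕ => ‖eratosthenes F d / d‖ := by simpa [norm_div] using hWA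
  have := apply_eq_zero_of_tsum_ite_dvd_eq_zero hb hd0 fun q hq =>
    hQ (d * q) (hd.trans_le (Nat.le_mul_of_pos_right d (Nat.pos_of_ne_zero hq)))
  simpa [hd0] using this

theorem winCoeff_eq_sum_filter_Icc {Q : ℕ} (hF : ∀ d, Q < d → eratosthenes F d = 0) (q : ℕ) :
    winCoeff F q = ∑ d ∈ (Icc 1 Q).filter (q ∣ ·), eratosthenes F d / d := by
  rw [winCoeff, tsum_eq_sum (s := Icc 1 Q), sum_filter]
  intro d hd
  rcases Nat.eq_zero_or_pos d with rfl | hd0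
  · simp
  · rw [mem_Icc] at hd
    simp [hF d (by omega)]

end Eratosthenes

/-- Under the Wintner Assumption, if the Wintner transform vanishes beyond `Q`,
then `F` has the finite Ramanujan expansion `F(a) = ∑_{q ≤ Q} (Win_q F) c_q(a)`. -/
theorem stmt6 (F : ℕ → ℂ)
    (hWA : Summable (fun d : ℕ => ‖eratosthenes F d‖ / d))
    (Q : ℕ) (hQ : ∀ q : ℕ, Q < q → winCoeff F q = 0)
    (a : ℕ) (ha : 0 < a) :
    F a = ∑ q ∈ Finset.Icc 1 Q, winCoeff F q * (ramanujanSum q a : ℂ) := by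
  have hF : ∀ d, Q < d → eratosthenes F d = 0 :=
    fun d => eratosthenes_eq_zero_of_winCoeff_eq_zero hWA hQ
  calc F a = ∑ d ∈ a.divisors, eratosthenes F d := (sum_divisors_eratosthenes ha).symm
    _ = ∑ d ∈ Icc 1 Q, if d ∣ a then eratosthenes F d else 0 :=
      Nat.sum_divisors_eq_sum_Icc_ite_dvd hF ha
    _ = ∑ d ∈ Icc 1 Q, ∑ q ∈ d.divisors, eratosthenes F d / d * ramanujanSum q a := by
      refine sum_congr rfl fun d hd => ?_
      rw [mem_Icc] at hd
      have hd0 : (d : ℂ) ≠ 0 := Nat.cast_ne_zero.2 (by omega)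
      rw [← mul_sum, ← Int.cast_sum, sum_divisors_ramanujanSum]
      split_ifs <;> simp [hd0]
    _ = ∑ q ∈ Icc 1 Q, winCoeff F q * ramanujanSum q a := by
      rw [Nat.sum_Icc_sum_divisors_comm]
      simp_rw [winCoeff_eq_sum_filter_Icc hF, sum_mul]
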